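/- arXiv:1408.2881 — 2 statements merged into one kernel-verified Lean document; each statement's English description precedes it below -/
import Mathlib

section
/- Each member of any Martin-Löf random closed set under the (k,ℓ)-induced distribution is truth-table equivalent to an infinite subset of a Martin-Löf random set under λ_{k,ℓ}. Concretely: if x ∈ Γ_S where S ⊆ K^{<ω}, then Y = {σ ∈ S : ι(σ) is an initial segment of x} is infinite, and x is truth-table (indeed, computably, via a fixed recursive translation) equivalent to Y. -/
open MeasureTheory
open scoped NNReal ENNReal Classical

/-- `w` is an initial segment of the infinite binary sequence `x`. -/
def PrefixOf (w : List Bool) (x : ℕ → Bool) : Prop :=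
  ∀ i < w.length, x i = w.getD i false

/-- The cylinder (basic clopen set) of sequences extending the string `w`. -/
def Cyl (w : List Bool) : Set (ℕ → Bool) := {x | PrefixOf w x}

/-- The first coordinate where two distinct sequences differ. -/
noncomputable def firstDiff (x y : ℕ → Bool) (h : x ≠ y) : ℕ :=
  Nat.find (show ∃ n, x n ≠ y n from by
    by_contra hc; push_neg at hc; exact h (funext fun n => hc n))

/-- The standard ultrametric on Cantor space, `υ(x,y) = 2^{-min{n : x n ≠ y n}}`. -/
noncomputable def upsilon (x y : ℕ → Bool) : ℝ :=
  if h : x = y then 0 else (2:ℝ) ^ (-(firstDiff x y h : ℝ))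

/-- Extended-real-valued version of the ultrametric. -/
noncomputable def upsilonE (x y : ℕ → Bool) : ℝ≥0∞ :=
  if h : x = y then 0 else (2:ℝ≥0∞) ^ (-(firstDiff x y h : ℝ))

/-- The `γ`-energy `∬ dμ(a) dμ(b) / υ(a,b)^γ` of a measure on Cantor space. -/
noncomputable def energy (γ : ℝ) (μ : Measure (ℕ → Bool)) : ℝ≥0∞ :=
  ∫⁻ a, ∫⁻ b, (upsilonE a b) ^ (-γ) ∂μ ∂μ

/-- `ν` is the product measure putting each index in the random set
independently with probability `p`. -/
def IsBernoulliProduct {α : Type} (ν : Measure (α → Bool)) (p : ℝ≥0∞) : Prop :=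
  ∀ F : Finset α, ν {S | ∀ a ∈ F, S a = true} = p ^ F.card

/-- Binary encoding of a symbol of `K = 2^k` as a length-`k` binary string. -/
def encSym (k : ℕ) (a : Fin (2^k)) : List Bool := List.ofFn fun i : Fin k => Nat.testBit a.val i.val

/-- The map `ι : K^{<ω} → 2^{<ω}` encoding each symbol in binary and concatenating. -/
def encStr (k : ℕ) (σ : List (Fin (2^k))) : List Bool := (σ.map (encSym k)).flatten

/-- `Γ_S`: the closed set of infinite binary paths through the `ι`-image of the
downward (prefix-) closed part of `S ⊆ K^{<ω}`. -/
def GammaS (k : ℕ) (S : List (Fin (2^k)) → Bool) : Set (ℕ → Bool) :=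
  {x | ∀ n : ℕ, ∃ σ : List (Fin (2^k)), σ.length = n ∧
    (∀ τ, τ <+: σ → S τ = true) ∧ PrefixOf (encStr k σ) x}

/-- The open subset `[V]^⪯` of Cantor space determined by a set of strings `V`. -/
def openOf (V : Set (List Bool)) : Set (ℕ → Bool) := {x | ∃ w ∈ V, PrefixOf w x}

/-- A uniformly c.e. family of sets of binary strings. -/
def CEFamily (U : ℕ → Set (List Bool)) : Prop :=
  ∃ G : ℕ × ℕ → Option (List Bool), Computable G ∧
    ∀ n w, w ∈ U n ↔ ∃ s, G (n, s) = some w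

/-- `x` passes every (plain, unrelativized) Martin-Löf test for the measure `μ`:
Martin-Löf/Hippocrates randomness with respect to `μ`. -/
def PassesPlainTests (μ : Measure (ℕ → Bool)) (x : ℕ → Bool) : Prop :=
  ∀ U : ℕ → Set (List Bool), CEFamily U →
    (∀ n, μ (openOf (U n)) ≤ ((2:ℝ≥0∞) ^ n)⁻¹) → x ∉ ⋂ n, openOf (U n)

/-- Value of a binary string read as a binary number (last bit most significant). -/
def bitsToNat (l : List Bool) : ℕ := l.foldr (fun b acc => 2*acc + cond b 1 0) 0

/-- Truth-table reducibility: a total computable functional, given by a computable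
function producing, for each `n`, a finite query list and a truth table. -/
def ttLE (x y : ℕ → Bool) : Prop :=
  ∃ F : ℕ → List ℕ × List Bool, Computable F ∧
    ∀ n, x n = (F n).2.getD (bitsToNat ((F n).1.map y)) false

/-- Partial recursiveness in an oracle `O` (Kleene-style, following `Nat.Partrec`). -/
inductive RecursiveInOracle (O : ℕ →. ℕ) : (ℕ →. ℕ) → Prop
  | oracle : RecursiveInOracle O O
  | zero : RecursiveInOracle O (pure 0)
  | succ : RecursiveInOracle O fun n => Part.some (n + 1)
  | left : RecursiveInOracle O fun n => Part.some (Nat.unpair n).1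
  | right : RecursiveInOracle O fun n => Part.some (Nat.unpair n).2
  | pair {f g} : RecursiveInOracle O f → RecursiveInOracle O g →
      RecursiveInOracle O fun n => Nat.pair <$> f n <*> g n
  | comp {f g} : RecursiveInOracle O f → RecursiveInOracle O g →
      RecursiveInOracle O fun n => g n >>= f
  | prec {f g} : RecursiveInOracle O f → RecursiveInOracle O g →
      RecursiveInOracle O (Nat.unpaired fun a n =>
        n.rec (f a) fun y IH => do let i ← IH; g (Nat.pair a (Nat.pair y i)))
  | rfind {f} : RecursiveInOracle O f →
      RecursiveInOracle O fun a => Nat.rfind fun n => (fun m => m = 0) <$> f (Nat.pair a n)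

/-- The total oracle corresponding to an infinite binary sequence. -/
def oracleOf (y : ℕ → Bool) : ℕ →. ℕ := fun n => Part.some (cond (y n) 1 0)

/-- Turing reducibility between binary sequences. -/
def turingLE (x y : ℕ → Bool) : Prop := RecursiveInOracle (oracleOf y) (oracleOf x)

/-- A family of string-sets uniformly c.e. in the oracle `O`. -/
def CEInFamily (O : ℕ →. ℕ) (U : ℕ → Set (List Bool)) : Prop :=
  ∃ p : ℕ →. ℕ, RecursiveInOracle O p ∧
    ∀ n w, w ∈ U n ↔ (Nat.pair n (Encodable.encode w)) ∈ p.Dom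

/-- `g` is a representation (an encoding as an oracle) of the measure `μ`:
`g (σ, n)` is a rational within `2^{-n}` of `μ([σ])`. -/
def Represents (g : List Bool × ℕ → ℚ) (μ : Measure (ℕ → Bool)) : Prop :=
  ∀ σ n, |(g (σ, n) : ℝ) - (μ (Cyl σ)).toReal| ≤ (2:ℝ) ^ (-(n:ℝ))

/-- The oracle determined by a representation `g` of a measure. -/
noncomputable def oracleOfRep (g : List Bool × ℕ → ℚ) : ℕ →. ℕ := fun n =>
  Part.some (Encodable.encode ((Encodable.decode (α := List Bool × ℕ) n).map g))

/-- `x` is `μ`-random: it passes every `μ`-relativized Martin-Löf test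
(uniformly c.e. in any representation of `μ`). -/
def MuRandom (μ : Measure (ℕ → Bool)) (x : ℕ → Bool) : Prop :=
  ∀ g : List Bool × ℕ → ℚ, Represents g μ →
    ∀ U : ℕ → Set (List Bool), CEInFamily (oracleOfRep g) U →
      (∀ n, μ (openOf (U n)) ≤ ((2:ℝ≥0∞) ^ n)⁻¹) → x ∉ ⋂ n, openOf (U n)

/-- The `γ`-weight of a set of strings. -/
noncomputable def wt (γ : ℝ) (C : Set (List Bool)) : ℝ≥0∞ :=
  ∑' w : C, (2:ℝ≥0∞) ^ (-(γ * ((w : List Bool)).length))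

/-- `x` is `γ`-random: it passes every Martin-Löf `γ`-test. -/
def GammaRandom (γ : ℝ) (x : ℕ → Bool) : Prop :=
  ∀ U : ℕ → Set (List Bool), CEFamily U →
    (∀ n, wt γ (U n) ≤ ((2:ℝ≥0∞) ^ n)⁻¹) → x ∉ ⋂ n, openOf (U n)

/-!
Since every symbol is encoded by exactly `k` bits, `ι` is injective and length-multiplying, so
for each `L` the unique `σ` of length `L` with `ι(σ) ⊑ x` is the one supplied by the definition
of `Γ_S`; in particular it lies in `S`. Hence `Y` is the set of these `σ`, one for each length.
To compute `x(n)` from `Y`, ask `Y` about all `K^(n+1)` strings of length `n + 1` and read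
bit `n` off the code of the one it contains; to decide `σ ∈ Y`, compare `ι(σ)` with
`x ↾ k|σ|`. Both use a bounded set of queries, i.e. they are truth-table reductions.
-/

lemma bitsToNat_cons (b : Bool) (l : List Bool) :
    bitsToNat (b :: l) = Nat.bit b (bitsToNat l) := by
  cases b <;> rfl

lemma bitsToNat_lt_two_pow (l : List Bool) : bitsToNat l < 2 ^ l.length := by
  induction l with
  | nil => simp [bitsToNat]
  | cons b l ih =>
    rw [bitsToNat_cons, Nat.bit_val, List.length_cons, pow_succ]
    cases b <;> simp <;> omega

lemma testBit_bitsToNat (l : List Bool) (i : ℕ) : (bitsToNat l).testBit i = l.getD i false := by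
  induction l generalizing i with
  | nil => simp [bitsToNat]
  | cons b l ih =>
    cases i with
    | zero => rw [bitsToNat_cons, Nat.testBit_bit_zero, List.getD_cons_zero]
    | succ i => rw [bitsToNat_cons, Nat.testBit_bit_succ, List.getD_cons_succ, ih]

def natToBits (n j : ℕ) : List Bool := (List.range n).map j.testBit

lemma natToBits_bitsToNat (l : List Bool) : natToBits l.length (bitsToNat l) = l := by
  refine List.ext_getElem (by simp [natToBits]) fun i h _ => ?_
  simp only [natToBits, List.getElem_map, List.getElem_range, testBit_bitsToNat]
  exact List.getD_eq_getElem _ _ _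

lemma primrec_pow : Primrec₂ (· ^ · : ℕ → ℕ → ℕ) :=
  Primrec₂.unpaired'.mp Nat.Primrec.pow

lemma primrec_natToBits : Primrec₂ natToBits := by
  have htestBit : Primrec₂ Nat.testBit := by
    refine (PrimrecRel.decide (R := fun j i : ℕ => j / 2 ^ i % 2 = 1) ?_).of_eq
      fun _ _ => Nat.testBit_eq_decide_div_mod_eq.symm
    exact Primrec.eq.comp (Primrec.nat_mod.comp (Primrec.nat_div.comp Primrec.fst
      (primrec_pow.comp (Primrec.const 2) Primrec.snd))
      (Primrec.const 2)) (Primrec.const 1)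
  exact Primrec.list_map (Primrec.list_range.comp Primrec.fst)
    (htestBit.comp (Primrec.snd.comp Primrec.fst) Primrec.snd)

lemma computable_list_map {α β σ : Type} [Primcodable α] [Primcodable β] [Primcodable σ]
    {l : α → List β} {g : α → β → σ} (hl : Computable l) (hg : Computable₂ g) :
    Computable fun a => (l a).map (g a) := by
  let step (a : α) (p : ℕ × List σ) : List σ :=
    ((l a)[p.1]?).casesOn p.2 fun b => p.2 ++ [g a b]
  have hstep : Computable₂ step :=
    Computable.option_casesOn (Computable.list_getElem?.comp (hl.comp Computable.fst)
      (Computable.fst.comp Computable.snd)) (Computable.snd.comp Computable.snd)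
      (Computable.list_concat.comp (Computable.snd.comp (Computable.snd.comp Computable.fst))
        (hg.comp (Computable.fst.comp Computable.fst) Computable.snd)).to₂
  have hrec : ∀ a m, Nat.rec (motive := fun _ => List σ) [] (fun i acc => step a (i, acc)) m
      = ((l a).take m).map (g a) := by
    intro a m
    induction m with
    | zero => simp
    | succ m ih =>
      simp only [ih, step, List.take_add_one]
      cases (l a)[m]? <;> simp
  exact (Computable.nat_rec (Computable.list_length.comp hl)
    (Computable.const []) hstep).of_eq fun a => by rw [hrec, List.take_length]

lemma ttLE_of_computable {x y : ℕ → Bool} (q : ℕ → List ℕ) (g : ℕ → List Bool → Bool)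
    (hq : Computable q) (hg : Computable₂ g) (h : ∀ n, x n = g n ((q n).map y)) :
    ttLE x y := by
  refine ⟨fun n => (q n, (List.range (2 ^ (q n).length)).map fun j =>
    g n (natToBits (q n).length j)), ?_, fun n => ?_⟩
  · have hlen : Computable fun n => (q n).length := Computable.list_length.comp hq
    refine hq.pair (computable_list_map (Primrec.list_range.to_comp.comp
      (primrec_pow.to_comp.comp (Computable.const 2) hlen)) ?_)
    exact hg.comp Computable.fst (primrec_natToBits.to_comp.comp (hlen.comp Computable.fst)
      Computable.snd)
  · have hlt := bitsToNat_lt_two_pow ((q n).map y)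
    rw [List.length_map] at hlt
    simp only
    rw [List.getD_eq_getElem _ _ (by simpa using hlt), List.getElem_map, List.getElem_range,
      h n, ← List.length_map (f := y), natToBits_bitsToNat]

lemma prefixOf_iff_map_range {w : List Bool} {x : ℕ → Bool} :
    PrefixOf w x ↔ (List.range w.length).map x = w := by
  refine ⟨fun h => List.ext_getElem (by simp) fun i _ hi => ?_, fun h i hi => ?_⟩
  · simpa [← List.getD_eq_getElem _ false hi] using h i hi
  · rw [← h, List.getD_eq_getElem _ _ (by simpa using hi)]
    simp

lemma PrefixOf.eq_of_length_eq {w w' : List Bool} {x : ℕ → Bool} (h : PrefixOf w x)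
    (h' : PrefixOf w' x) (hl : w.length = w'.length) : w = w' := by
  rw [prefixOf_iff_map_range] at h h'
  rw [← h, ← h', hl]

lemma encSym_length (k : ℕ) (a : Fin (2^k)) : (encSym k a).length = k := by
  simp [encSym]

lemma encStr_length (k : ℕ) (σ : List (Fin (2^k))) : (encStr k σ).length = k * σ.length := by
  simp [encStr, List.length_flatten, Function.comp_def, encSym_length, mul_comm]

lemma encSym_injective (k : ℕ) : Function.Injective (encSym k) := by
  intro a b h
  have hbits := List.ofFn_inj.mp h
  refine Fin.ext (Nat.eq_of_testBit_eq fun i => ?_)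
  by_cases hi : i < k
  · exact congrFun hbits ⟨i, hi⟩
  · have hk : 2 ^ k ≤ 2 ^ i := Nat.pow_le_pow_right two_pos (not_lt.mp hi)
    rw [Nat.testBit_lt_two_pow (a.isLt.trans_le hk), Nat.testBit_lt_two_pow (b.isLt.trans_le hk)]

lemma encStr_injective {k : ℕ} (hk : 0 < k) : Function.Injective (encStr k) := by
  intro σ σ' h
  induction σ generalizing σ' with
  | nil => cases σ' with
    | nil => rfl
    | cons b σ' => simpa [encStr_length, hk.ne'] using congrArg List.length h
  | cons a σ ih => cases σ' with
    | nil => simpa [encStr_length, hk.ne'] using congrArg List.length h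
    | cons b σ' =>
      obtain ⟨hab, hσ⟩ := List.append_inj (by simpa [encStr] using h)
        (by rw [encSym_length, encSym_length])
      rw [encSym_injective k hab, ih hσ]

lemma primrec_encStr (k : ℕ) : Primrec (encStr k) :=
  Primrec.list_flatten.comp (Primrec.list_map Primrec.id
    ((Primrec.dom_finite (encSym k)).comp Primrec.snd).to₂)

section Words

variable {α : Type}

def words (A : List α) (L : ℕ) : List (List α) :=
  (fun W => W.flatMap fun σ => A.map (· :: σ))^[L] [[]]

lemma mem_words {A : List α} {L : ℕ} {σ : List α} :
    σ ∈ words A L ↔ σ.length = L ∧ ∀ a ∈ σ, a ∈ A := by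
  induction L generalizing σ with
  | zero => simp +contextual [words, List.length_eq_zero_iff]
  | succ L ih =>
    cases σ with
    | nil => simp [words, Function.iterate_succ_apply']
    | cons a σ =>
      simp only [words, Function.iterate_succ_apply', List.mem_flatMap, List.mem_map,
        List.cons.injEq] at ih ⊢
      simp only [ih, List.length_cons, List.mem_cons, forall_eq_or_imp]
      grind

lemma primrec_words [Primcodable α] (A : List α) : Primrec (words A) :=
  Primrec.nat_iterate Primrec.id (Primrec.const [[]])
    (Primrec.list_flatMap Primrec.snd
      (Primrec.list_map (Primrec.const A) (Primrec.list_cons.comp Primrec.snd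
        (Primrec.snd.comp Primrec.fst)).to₂).to₂).to₂

end Words

lemma computable_find_preimage {α : Type} [Primcodable α] [DecidableEq α] {f : ℕ → α}
    (hfc : Computable f) (hf : Function.Surjective f) :
    Computable fun a => Nat.find (hf a) := by
  have hp : Computable₂ fun (a : α) (n : ℕ) => decide (f n = a) :=
    (Primrec.eq.decide.to_comp.comp (hfc.comp Computable.snd) Computable.fst).to₂
  refine (Partrec.rfind hp.partrec₂).of_eq_tot fun a => Nat.mem_rfind.2 ⟨?_, fun hm => ?_⟩
  · simpa using Nat.find_spec (hf a)
  · simpa using Nat.find_min (hf a) hm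

section GammaS

/-- The characteristic sequence of `Y = {σ ∈ S : ι(σ) ⊑ x}` along the enumeration `f`. -/
noncomputable def prefixIndicator {k : ℕ} (S : List (Fin (2^k)) → Bool) (x : ℕ → Bool)
    (f : ℕ → List (Fin (2^k))) (n : ℕ) : Bool :=
  S (f n) && decide (PrefixOf (encStr k (f n)) x)

variable {k : ℕ} {S : List (Fin (2^k)) → Bool} {x : ℕ → Bool}

lemma exists_prefixOf_of_mem_GammaS (hx : x ∈ GammaS k S) (L : ℕ) :
    ∃ σ, σ.length = L ∧ S σ = true ∧ PrefixOf (encStr k σ) x := by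
  obtain ⟨σ, hlen, hS, hpre⟩ := hx L
  exact ⟨σ, hlen, hS σ (List.prefix_refl σ), hpre⟩

lemma S_of_prefixOf (hk : 0 < k) (hx : x ∈ GammaS k S) {σ : List (Fin (2^k))}
    (h : PrefixOf (encStr k σ) x) : S σ = true := by
  obtain ⟨σ', hlen, hS, hpre⟩ := exists_prefixOf_of_mem_GammaS hx σ.length
  rwa [encStr_injective hk (h.eq_of_length_eq hpre (by simp [encStr_length, hlen]))]

lemma S_and_prefixOf_eq (hk : 0 < k) (hx : x ∈ GammaS k S) (σ : List (Fin (2^k))) :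
    (S σ && decide (PrefixOf (encStr k σ) x)) = decide (PrefixOf (encStr k σ) x) := by
  by_cases h : PrefixOf (encStr k σ) x
  · simp [h, S_of_prefixOf hk hx h]
  · simp [h]

lemma infinite_of_mem_GammaS (hx : x ∈ GammaS k S) :
    {σ | S σ = true ∧ PrefixOf (encStr k σ) x}.Infinite := by
  choose σ hlen hσ using exists_prefixOf_of_mem_GammaS hx
  exact Set.infinite_of_injective_forall_mem (fun L L' h => by rw [← hlen L, ← hlen L', h]) hσ

lemma prefixOf_iff_of_mem_GammaS (hx : x ∈ GammaS k S) {τ : List Bool} (hτ : k ∣ τ.length) :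
    PrefixOf τ x ↔ ∃ σ, S σ = true ∧ PrefixOf (encStr k σ) x ∧ encStr k σ = τ := by
  refine ⟨fun hpre => ?_, fun ⟨σ, _, hσ, hστ⟩ => hστ ▸ hσ⟩
  obtain ⟨L, hL⟩ := hτ
  obtain ⟨σ, hlen, hS, hσ⟩ := exists_prefixOf_of_mem_GammaS hx L
  exact ⟨σ, hS, hσ, hσ.eq_of_length_eq hpre (by rw [encStr_length, hlen, hL])⟩

lemma ttLE_prefixIndicator (hk : 0 < k) (hx : x ∈ GammaS k S) {f : ℕ → List (Fin (2^k))}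
    (hfc : Computable f) (hf : Function.Surjective f) :
    ttLE x (prefixIndicator S x f) := by
  let W (n : ℕ) := words (List.finRange (2^k)) (n + 1)
  have hW : Primrec W := (primrec_words _).comp Primrec.succ
  refine ttLE_of_computable (fun n => (W n).map fun σ => Nat.find (hf σ))
    (fun n ans => (encStr k ((W n).getD (ans.findIdx id) [])).getD n false)
    (computable_list_map hW.to_comp ((computable_find_preimage hfc hf).comp Computable.snd).to₂)
    (Primrec₂.to_comp ((Primrec.list_getD false).comp ((primrec_encStr k).comp
      ((Primrec.list_getD []).comp (hW.comp Primrec.fst)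
        (Primrec.list_findIdx Primrec.snd Primrec₂.right))) Primrec.fst)) fun n => ?_
  let P (σ : List (Fin (2^k))) : Bool := decide (PrefixOf (encStr k σ) x)
  have hans : ((W n).map fun σ => Nat.find (hf σ)).map (prefixIndicator S x f) =
      (W n).map P := by
    simp only [prefixIndicator, List.map_map, Function.comp_def, Nat.find_spec (hf _),
      S_and_prefixOf_eq hk hx]
    rfl
  obtain ⟨σ, hlen, -, hσ⟩ := exists_prefixOf_of_mem_GammaS hx (n + 1)
  have hex : ∃ σ ∈ W n, P σ = true := ⟨σ, mem_words.2 ⟨hlen, by simp⟩, decide_eq_true hσ⟩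
  have hlt := List.findIdx_lt_length_of_exists hex
  have hfound : P (W n)[(W n).findIdx P] = true := List.findIdx_getElem
  have hlen' := (mem_words.1 (List.getElem_mem hlt)).1
  rw [hans, List.findIdx_map, Function.id_comp, List.getD_eq_getElem _ _ hlt]
  refine (of_decide_eq_true hfound) n ?_
  rw [encStr_length, hlen']
  nlinarith

lemma prefixIndicator_ttLE (hk : 0 < k) (hx : x ∈ GammaS k S) {f : ℕ → List (Fin (2^k))}
    (hfc : Computable f) :
    ttLE (prefixIndicator S x f) x := by
  have hlen : Computable fun n => k * (f n).length :=
    (Primrec.nat_mul.comp (Primrec.const k) Primrec.list_length).to_comp.comp hfc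
  refine ttLE_of_computable (fun n => List.range (k * (f n).length))
    (fun n ans => decide (ans = encStr k (f n)))
    (Primrec.list_range.to_comp.comp hlen)
    (Primrec.eq.decide.to_comp.comp Computable.snd
      ((primrec_encStr k).to_comp.comp (hfc.comp Computable.fst))).to₂ fun n => ?_
  rw [prefixIndicator, S_and_prefixOf_eq hk hx, prefixOf_iff_map_range, encStr_length]
  -- the two sides differ only in the `Decidable` instance (classical vs. `List`'s)
  congr

end GammaS

theorem stmt15 (k : ℕ) (hk : 1 ≤ k) (f : ℕ → List (Fin (2^k)))
    (hfc : Computable f) (hfb : Function.Bijective f)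
    (S : List (Fin (2^k)) → Bool) (x : ℕ → Bool) (hx : x ∈ GammaS k S) :
    {σ : List (Fin (2^k)) | S σ = true ∧ PrefixOf (encStr k σ) x}.Infinite ∧
    (∀ τ : List Bool, k ∣ τ.length →
      (PrefixOf τ x ↔ ∃ σ, S σ = true ∧ PrefixOf (encStr k σ) x ∧ encStr k σ = τ)) ∧
    ttLE x (fun n => S (f n) && decide (PrefixOf (encStr k (f n)) x)) ∧
    ttLE (fun n => S (f n) && decide (PrefixOf (encStr k (f n)) x)) x :=
  ⟨infinite_of_mem_GammaS hx, fun _ => prefixOf_iff_of_mem_GammaS hx,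
    ttLE_prefixIndicator hk hx hfc hfb.surjective, prefixIndicator_ttLE hk hx hfc⟩
end

section
/- If x ∈ 2^ω is β-capacitable for some β > γ ≥ 0, then x is γ-energy random (and hence Hippocrates γ-energy random). -/
open MeasureTheory
open scoped NNReal ENNReal Classical

/-! For fixed `a`, `υ(a, b) ^ (-γ) = 2 ^ (γ N)` with `N` the length of the common prefix of `a`
and `b`, so `υ(a, ·) ^ (-γ) ≤ ∑ₙ 2 ^ (γ n) 𝟙[a ↾ n]`. Integrating against `μ` and using
`μ [a ↾ n] ≤ c 2 ^ (-β n)` bounds the inner integral, uniformly in `a`, by the geometric series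
`c ∑ₙ 2 ^ ((γ - β) n)`, which converges because `γ < β`. So `μ` itself witnesses energy randomness;
and since an unrelativized test is c.e. in every oracle, `μ`-random sequences pass all plain tests. -/
lemma upsilonE_eq_of_ne {a b : ℕ → Bool} (h : a ≠ b) :
    upsilonE a b = 2 ^ (-(PiNat.firstDiff a b : ℝ)) := by
  rw [upsilonE, dif_neg h, firstDiff, PiNat.firstDiff_def, dif_pos h]
  congr

lemma PiNat.measurableSet_cylinder {E : ℕ → Type*} [∀ n, MeasurableSpace (E n)]
    [∀ n, MeasurableSingletonClass (E n)] (a : ∀ n, E n) (n : ℕ) :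
    MeasurableSet (PiNat.cylinder a n) := by
  rw [PiNat.cylinder_eq_pi]
  exact MeasurableSet.pi (Set.to_countable _) fun i _ => measurableSet_singleton _

lemma cyl_ofFn_eq_cylinder (a : ℕ → Bool) (n : ℕ) :
    Cyl (List.ofFn fun i : Fin n => a i) = PiNat.cylinder a n := by
  ext b
  simp only [Cyl, PrefixOf, List.length_ofFn, List.getD_eq_getElem?_getD, List.getElem?_ofFn,
    Set.mem_ofPred_eq, PiNat.mem_cylinder_iff]
  refine forall₂_congr fun i hi => ?_
  simp [hi]

lemma upsilonE_rpow_neg_le_tsum (γ : ℝ) (a b : ℕ → Bool) :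
    upsilonE a b ^ (-γ) ≤ ∑' n : ℕ, (PiNat.cylinder a n).indicator (fun _ => (2 ^ γ) ^ n) b := by
  by_cases hab : a = b
  · subst hab
    -- on the diagonal the left side is `0 ^ (-γ)`, and the geometric series is `⊤` once `γ ≥ 0`
    rcases lt_or_ge γ 0 with hγ | hγ
    · simp [upsilonE, ENNReal.zero_rpow_of_pos (neg_pos.2 hγ)]
    · have : (1 : ℝ≥0∞) ≤ 2 ^ γ := by
        simpa using ENNReal.rpow_le_rpow_of_exponent_le one_le_two hγ
      simp [ENNReal.tsum_geometric, tsub_eq_zero_of_le this]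
  · calc upsilonE a b ^ (-γ) = (2 ^ γ) ^ PiNat.firstDiff b a := by
          rw [upsilonE_eq_of_ne hab, ← ENNReal.rpow_mul, ← ENNReal.rpow_mul_natCast,
            PiNat.firstDiff_comm]
          ring_nf
      _ ≤ _ := by
          refine le_of_eq_of_le ?_ (ENNReal.le_tsum (PiNat.firstDiff b a))
          rw [Set.indicator_of_mem (PiNat.mem_cylinder_firstDiff b a)]

lemma measure_cylinder_le_of_measure_cyl_le {μ : Measure (ℕ → Bool)} {c : ℝ≥0∞} {β : ℝ}
    (hμ : ∀ σ : List Bool, μ (Cyl σ) ≤ c * 2 ^ (-(β * σ.length))) (a : ℕ → Bool) (n : ℕ) :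
    μ (PiNat.cylinder a n) ≤ c * (2 ^ (-β)) ^ n := by
  simpa [cyl_ofFn_eq_cylinder, ← ENNReal.rpow_mul_natCast] using
    hμ (List.ofFn fun i : Fin n => a i)

lemma lintegral_upsilonE_rpow_neg_le {μ : Measure (ℕ → Bool)} {c : ℝ≥0∞} {γ β : ℝ}
    (hμ : ∀ a n, μ (PiNat.cylinder a n) ≤ c * (2 ^ (-β)) ^ n) (a : ℕ → Bool) :
    ∫⁻ b, upsilonE a b ^ (-γ) ∂μ ≤ c * (1 - 2 ^ (γ - β))⁻¹ := calc
  _ ≤ ∫⁻ b, ∑' n : ℕ, (PiNat.cylinder a n).indicator (fun _ => (2 ^ γ) ^ n) b ∂μ :=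
      lintegral_mono fun b => upsilonE_rpow_neg_le_tsum γ a b
  _ = ∑' n : ℕ, (2 ^ γ) ^ n * μ (PiNat.cylinder a n) := by
      rw [lintegral_tsum fun n => (measurable_const.indicator
        (PiNat.measurableSet_cylinder a n)).aemeasurable]
      simp only [lintegral_indicator_const (PiNat.measurableSet_cylinder a _)]
  _ ≤ ∑' n : ℕ, c * (2 ^ (γ - β)) ^ n := by
      refine ENNReal.tsum_le_tsum fun n => ?_
      calc (2 ^ γ) ^ n * μ (PiNat.cylinder a n) ≤ (2 ^ γ) ^ n * (c * (2 ^ (-β)) ^ n) := by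
            gcongr; exact hμ a n
        _ = c * (2 ^ (γ - β)) ^ n := by
            rw [sub_eq_add_neg, ENNReal.rpow_add _ _ two_ne_zero ENNReal.ofNat_ne_top, mul_pow]
            ring
  _ = c * (1 - 2 ^ (γ - β))⁻¹ := by rw [ENNReal.tsum_mul_left, ENNReal.tsum_geometric]

lemma energy_lt_top_of_measure_cylinder_le {μ : Measure (ℕ → Bool)} [IsFiniteMeasure μ]
    {c : ℝ≥0∞} {γ β : ℝ} (hc : c ≠ ⊤) (hβ : γ < β)
    (hμ : ∀ a n, μ (PiNat.cylinder a n) ≤ c * (2 ^ (-β)) ^ n) : energy γ μ < ⊤ := by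
  have hratio : (2 : ℝ≥0∞) ^ (γ - β) < 1 :=
    ENNReal.rpow_lt_one_of_one_lt_of_neg (by norm_num) (by linarith)
  calc energy γ μ ≤ ∫⁻ _, c * (1 - 2 ^ (γ - β))⁻¹ ∂μ :=
        lintegral_mono (lintegral_upsilonE_rpow_neg_le hμ)
    _ = c * (1 - 2 ^ (γ - β))⁻¹ * μ Set.univ := lintegral_const _
    _ < ⊤ := ENNReal.mul_lt_top (ENNReal.mul_lt_top hc.lt_top
        (ENNReal.inv_lt_top.2 (tsub_pos_iff_lt.2 hratio))) (measure_lt_top μ _)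

theorem RecursiveInOracle.of_partrec (O : ℕ →. ℕ) {f : ℕ →. ℕ} (hf : Nat.Partrec f) :
    RecursiveInOracle O f := by
  induction hf with
  | zero => exact .zero
  | succ => exact .succ
  | left => exact .left
  | right => exact .right
  | pair _ _ ih₁ ih₂ => exact .pair ih₁ ih₂
  | comp _ _ ih₁ ih₂ => exact .comp ih₁ ih₂
  | prec _ _ ih₁ ih₂ => exact .prec ih₁ ih₂
  | rfind _ ih => exact .rfind ih

theorem CEFamily.ceInFamily {U : ℕ → Set (List Bool)} (hU : CEFamily U) (O : ℕ →. ℕ) :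
    CEInFamily O U := by
  obtain ⟨G, hG, hmem⟩ := hU
  let enumerates : ℕ → ℕ → Bool := fun m s =>
    decide (G (m.unpair.1, s) = Encodable.decode m.unpair.2)
  have henum : Computable₂ enumerates :=
    Primrec.eq.decide.to_comp.comp
      (hG.comp (Computable.pair (Computable.fst.comp (Computable.unpair.comp Computable.fst))
        Computable.snd))
      (Computable.decode.comp (Computable.snd.comp (Computable.unpair.comp Computable.fst)))
  refine ⟨fun m => Nat.rfind (enumerates m),
    .of_partrec O (Partrec.nat_iff.1 (Partrec.rfind henum.partrec₂)), fun n w => ?_⟩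
  simp [hmem, enumerates]

lemma exists_represents (μ : Measure (ℕ → Bool)) : ∃ g : List Bool × ℕ → ℚ, Represents g μ := by
  have hrat : ∀ p : List Bool × ℕ, ∃ q : ℚ,
      |(q : ℝ) - (μ (Cyl p.1)).toReal| ≤ (2 : ℝ) ^ (-(p.2 : ℝ)) := fun p =>
    let ⟨q, hq⟩ := exists_rat_near (μ (Cyl p.1)).toReal
      (by positivity : (0 : ℝ) < 2 ^ (-(p.2 : ℝ)))
    ⟨q, (abs_sub_comm _ _).trans_le hq.le⟩
  choose g hg using hrat
  exact ⟨g, fun σ n => hg (σ, n)⟩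

lemma MuRandom.passesPlainTests {μ : Measure (ℕ → Bool)} {x : ℕ → Bool} (hx : MuRandom μ x) :
    PassesPlainTests μ x := fun U hU hμU =>
  let ⟨g, hg⟩ := exists_represents μ
  hx g hg U (hU.ceInFamily _) hμU

theorem stmt17_general (γ β : ℝ) (hβ : γ < β) (x : ℕ → Bool)
    (hcap : ∃ (μ : Measure (ℕ → Bool)) (c : ℝ≥0), IsProbabilityMeasure μ ∧
      (∀ σ : List Bool, μ (Cyl σ) ≤ (c:ℝ≥0∞) * (2:ℝ≥0∞) ^ (-(β * σ.length))) ∧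
      MuRandom μ x) :
    (∃ μ : Measure (ℕ → Bool), IsProbabilityMeasure μ ∧ energy γ μ < ⊤ ∧ MuRandom μ x) ∧
    (∃ μ : Measure (ℕ → Bool), IsProbabilityMeasure μ ∧ energy γ μ < ⊤ ∧
      PassesPlainTests μ x) := by
  obtain ⟨μ, c, hprob, hcyl, hx⟩ := hcap
  have hE : energy γ μ < ⊤ := energy_lt_top_of_measure_cylinder_le ENNReal.coe_ne_top hβ
    (measure_cylinder_le_of_measure_cyl_le hcyl)
  exact ⟨⟨μ, hprob, hE, hx⟩, ⟨μ, hprob, hE, hx.passesPlainTests⟩⟩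

theorem stmt17 (γ β : ℝ) (hγ : 0 ≤ γ) (hβ : γ < β) (x : ℕ → Bool)
    (hcap : ∃ (μ : Measure (ℕ → Bool)) (c : ℝ≥0), IsProbabilityMeasure μ ∧
      (∀ σ : List Bool, μ (Cyl σ) ≤ (c:ℝ≥0∞) * (2:ℝ≥0∞) ^ (-(β * σ.length))) ∧
      MuRandom μ x) :
    (∃ μ : Measure (ℕ → Bool), IsProbabilityMeasure μ ∧ energy γ μ < ⊤ ∧ MuRandom μ x) ∧
    (∃ μ : Measure (ℕ → Bool), IsProbabilityMeasure μ ∧ energy γ μ < ⊤ ∧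
      PassesPlainTests μ x) :=
  stmt17_general γ β hβ x hcap
end
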